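/- The rank of the degree-2k graded component of Z[t₁,…,tₙ]/(e₁,…,eₙ) (with each tᵢ in degree 2) equals the number of permutations of n letters with exactly k inversions, and in particular the total rank of the quotient is n!. -/

import Mathlib

open Finset Equiv

abbrev CBox (n : ℕ) := ∀ i : Fin n, Fin (n - (i : ℕ))

def cwt {n : ℕ} (a : CBox n) : ℕ := ∑ i, ((a i : ℕ))

def invCount {n : ℕ} (σ : Equiv.Perm (Fin n)) : ℕ :=
  (Finset.univ.filter fun p : Fin n × Fin n => p.1 < p.2 ∧ σ p.2 < σ p.1).card

noncomputable def insF {n : ℕ} (p : Fin (n+1)) (e : Equiv.Perm (Fin n)) :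
    Equiv.Perm (Fin (n+1)) :=
  Equiv.ofBijective (fun x => Fin.cases p (fun i => p.succAbove (e i)) x) (by
    rw [Fintype.bijective_iff_injective_and_card]
    refine ⟨fun x y h => ?_, rfl⟩
    induction x using Fin.cases with
    | zero =>
      induction y using Fin.cases with
      | zero => rfl
      | succ j => simp at h
    | succ i =>
      induction y using Fin.cases with
      | zero => simp at h
      | succ j =>
        simp only [Fin.cases_succ] at h
        have h2 := e.injective (Fin.succAbove_right_injective (p := p) h)
        rw [h2])

@[simp] lemma insF_zero {n : ℕ} (p : Fin (n+1)) (e : Equiv.Perm (Fin n)) :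
    insF p e 0 = p := rfl

@[simp] lemma insF_succ {n : ℕ} (p : Fin (n+1)) (e : Equiv.Perm (Fin n)) (i : Fin n) :
    insF p e i.succ = p.succAbove (e i) := rfl

noncomputable def insEquiv (n : ℕ) :
    Fin (n+1) × Equiv.Perm (Fin n) ≃ Equiv.Perm (Fin (n+1)) :=
  Equiv.ofBijective (fun x => insF x.1 x.2) (by
    rw [Fintype.bijective_iff_injective_and_card]
    constructor
    · rintro ⟨p, e⟩ ⟨p', e'⟩ h
      have h0 : p = p' := by
        have := congrArg (fun σ : Equiv.Perm (Fin (n+1)) => σ 0) h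
        simpa using this
      subst h0
      have : e = e' := by
        apply Equiv.ext; intro i
        have := congrArg (fun σ : Equiv.Perm (Fin (n+1)) => σ i.succ) h
        simp only [insF_succ] at this
        exact Fin.succAbove_right_injective (p := p) this
      rw [this]
    · simp [Fintype.card_perm, Nat.factorial_succ])

lemma card_filter_castSucc_lt {n : ℕ} (p : Fin (n+1)) :
    (univ.filter fun x : Fin n => x.castSucc < p).card = (p : ℕ) := by
  rw [← Finset.card_range (p : ℕ)]
  refine Finset.card_bij' (fun x _ => (x : ℕ))
    (fun m hm => (⟨m, lt_of_lt_of_le (Finset.mem_range.mp hm) (Nat.lt_succ_iff.mp p.isLt)⟩ : Fin n))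
    ?_ ?_ ?_ ?_
  · intro a ha
    simp only [mem_filter, mem_univ, true_and, Fin.lt_def, Fin.coe_castSucc] at ha
    simpa using ha
  · intro b hb
    simp only [mem_filter, mem_univ, true_and, Fin.lt_def, Fin.coe_castSucc]
    exact Finset.mem_range.mp hb
  · intro a _; rfl
  · intro b _; rfl

lemma invCount_insF {n : ℕ} (p : Fin (n+1)) (e : Equiv.Perm (Fin n)) :
    invCount (insF p e) = (p : ℕ) + invCount e := by
  classical
  set σ := insF p e with hσ
  set S := univ.filter (fun q : Fin (n+1) × Fin (n+1) => q.1 < q.2 ∧ σ q.2 < σ q.1) with hS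
  have key := Finset.card_filter_add_card_filter_not
    (s := S) (p := fun q => q.1 = 0)
  have hA : (S.filter (fun q => q.1 = 0)).card = (p : ℕ) := by
    have step1 : (univ.filter fun j : Fin n => (e j).castSucc < p).card
        = (S.filter (fun q => q.1 = 0)).card := by
      refine Finset.card_bij' (fun j _ => ((0 : Fin (n+1)), j.succ))
        (fun q hq => q.2.pred (by
          simp only [hS, Finset.mem_filter, mem_univ, true_and] at hq
          exact Fin.pos_iff_ne_zero.mp (lt_of_le_of_lt (Fin.zero_le _) hq.1.1)))
        ?_ ?_ ?_ ?_
      · intro j hj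
        simp only [mem_filter, mem_univ, true_and] at hj
        simp only [hS, Finset.mem_filter, mem_univ, true_and]
        refine ⟨⟨Fin.succ_pos j, ?_⟩, trivial⟩
        simpa [hσ] using (Fin.succAbove_lt_iff_castSucc_lt p (e j)).mpr hj
      · rintro ⟨q1, q2⟩ hq
        simp only [hS, Finset.mem_filter, mem_univ, true_and] at hq
        obtain ⟨⟨h12, hlt⟩, h10⟩ := hq
        dsimp only at h10 hlt h12 ⊢
        subst h10
        have hne : q2 ≠ 0 :=
          Fin.pos_iff_ne_zero.mp (lt_of_le_of_lt (Fin.zero_le _) h12)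
        obtain ⟨j, rfl⟩ := Fin.exists_succ_eq.mpr hne
        simp only [mem_filter, mem_univ, true_and, Fin.pred_succ]
        rw [← Fin.succAbove_lt_iff_castSucc_lt p]
        simpa [hσ] using hlt
      · intro j _
        simp [Fin.pred_succ]
      · rintro ⟨q1, q2⟩ hq
        simp only [hS, Finset.mem_filter, mem_univ, true_and] at hq
        obtain ⟨⟨h12, hlt⟩, h10⟩ := hq
        dsimp only at h10 hlt h12 ⊢
        subst h10
        have hne : q2 ≠ 0 :=
          Fin.pos_iff_ne_zero.mp (lt_of_le_of_lt (Fin.zero_le _) h12)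
        obtain ⟨j, rfl⟩ := Fin.exists_succ_eq.mpr hne
        simp [Fin.pred_succ]
    rw [← step1]
    rw [Finset.card_equiv e (t := univ.filter fun x : Fin n => x.castSucc < p)
      (by intro j; simp)]
    exact card_filter_castSucc_lt p
  have hC : (S.filter (fun q => ¬ q.1 = 0)).card = invCount e := by
    rw [invCount]
    symm
    refine Finset.card_bij' (fun r _ => (r.1.succ, r.2.succ))
      (fun q hq => (q.1.pred (by
          simp only [hS, Finset.mem_filter, mem_univ, true_and] at hq
          exact hq.2),
        q.2.pred (by
          simp only [hS, Finset.mem_filter, mem_univ, true_and] at hq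
          exact Fin.pos_iff_ne_zero.mp (lt_of_le_of_lt (Fin.zero_le _) hq.1.1))))
      ?_ ?_ ?_ ?_
    · intro r hr
      simp only [mem_filter, mem_univ, true_and] at hr
      simp only [hS, Finset.mem_filter, mem_univ, true_and]
      refine ⟨⟨by simpa [Fin.succ_lt_succ_iff] using hr.1, ?_⟩, Fin.succ_ne_zero _⟩
      simpa [hσ, Fin.succAbove_lt_succAbove_iff] using hr.2
    · rintro ⟨q1, q2⟩ hq
      simp only [hS, Finset.mem_filter, mem_univ, true_and] at hq
      obtain ⟨⟨h12, hlt⟩, h10⟩ := hq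
      dsimp only at h10 hlt h12 ⊢
      have hne2 : q2 ≠ 0 :=
        Fin.pos_iff_ne_zero.mp (lt_of_le_of_lt (Fin.zero_le _) h12)
      obtain ⟨i, rfl⟩ := Fin.exists_succ_eq.mpr h10
      obtain ⟨j, rfl⟩ := Fin.exists_succ_eq.mpr hne2
      simp only [mem_filter, mem_univ, true_and, Fin.pred_succ]
      constructor
      · simpa [Fin.succ_lt_succ_iff] using h12
      · rw [← Fin.succAbove_lt_succAbove_iff (p := p)]
        simpa [hσ] using hlt
    · intro r _
      simp [Fin.pred_succ]
    · rintro ⟨q1, q2⟩ hq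
      simp only [hS, Finset.mem_filter, mem_univ, true_and] at hq
      obtain ⟨⟨h12, hlt⟩, h10⟩ := hq
      dsimp only at h10 hlt h12 ⊢
      have hne2 : q2 ≠ 0 :=
        Fin.pos_iff_ne_zero.mp (lt_of_le_of_lt (Fin.zero_le _) h12)
      obtain ⟨i, rfl⟩ := Fin.exists_succ_eq.mpr h10
      obtain ⟨j, rfl⟩ := Fin.exists_succ_eq.mpr hne2
      simp [Fin.pred_succ]
  rw [invCount, ← hS, ← key, hA, hC]

def ctail {n : ℕ} (a : CBox (n+1)) : CBox n :=
  fun i => Fin.cast (by rw [Fin.val_succ, Nat.succ_sub_succ]) (a i.succ)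

def ccons {n : ℕ} (p : Fin (n+1)) (b : CBox n) : CBox (n+1) :=
  fun i => Fin.cases (motive := fun i : Fin (n+1) => Fin (n + 1 - (i : ℕ)))
    p (fun j => Fin.cast (by rw [Fin.val_succ, Nat.succ_sub_succ]) (b j)) i

def boxEquiv (n : ℕ) : Fin (n+1) × CBox n ≃ CBox (n+1) where
  toFun x := ccons x.1 x.2
  invFun a := (a 0, ctail a)
  left_inv := by
    rintro ⟨p, b⟩
    refine Prod.ext rfl ?_
    funext i
    simp only [ctail, ccons, Fin.cases_succ]
    ext; simp; rfl
  right_inv := by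
    intro a
    funext i
    induction i using Fin.cases with
    | zero => rfl
    | succ j => simp only [ccons, ctail, Fin.cases_succ]; ext; simp

lemma cwt_ccons {n : ℕ} (p : Fin (n+1)) (b : CBox n) :
    cwt (ccons p b) = (p : ℕ) + cwt b := by
  rw [cwt, Fin.sum_univ_succ]
  have h0 : ((ccons p b) 0 : ℕ) = (p : ℕ) := rfl
  have hj : ∀ j : Fin n, ((ccons p b) j.succ : ℕ) = (b j : ℕ) := fun j => by
    simp [ccons]; rfl
  simp only [h0, hj, cwt]

instance permFinZeroUnique : Unique (Equiv.Perm (Fin 0)) :=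
  ⟨⟨1⟩, fun σ => Equiv.ext fun i => i.elim0⟩

noncomputable def permToBox : (n : ℕ) → Equiv.Perm (Fin n) ≃ CBox n
  | 0 => Equiv.ofUnique _ _
  | (n+1) => (insEquiv n).symm.trans
      ((Equiv.prodCongr (Equiv.refl _) (permToBox n)).trans (boxEquiv n))

lemma invCount_permToBox : ∀ (n : ℕ) (σ : Equiv.Perm (Fin n)),
    invCount σ = cwt (permToBox n σ)
  | 0, σ => by
    simp [invCount, cwt]
  | (n+1), σ => by
    obtain ⟨⟨p, e⟩, rfl⟩ := (insEquiv n).surjective σ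
    have h1 : invCount (insEquiv n (p, e)) = (p : ℕ) + invCount e := invCount_insF p e
    rw [h1, invCount_permToBox n e]
    show _ = cwt ((boxEquiv n) ((Equiv.prodCongr (Equiv.refl _) (permToBox n))
      ((insEquiv n).symm (insEquiv n (p, e)))))
    rw [Equiv.symm_apply_apply]
    show _ = cwt (ccons p (permToBox n e))
    rw [cwt_ccons]

theorem count_inv_eq_count_box (n k : ℕ) :
    (Finset.univ.filter fun σ : Equiv.Perm (Fin n) => invCount σ = k).card =
    (Finset.univ.filter fun a : CBox n => cwt a = k).card :=
  Finset.card_equiv (permToBox n) (fun σ => by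
    simp [invCount_permToBox n σ])

open MvPolynomial Finset

section EsymmRec

variable {R : Type*} [CommRing R]

lemma multiset_esymm_cons (a : R) (s : Multiset R) (k : ℕ) :
    (a ::ₘ s).esymm (k+1) = s.esymm (k+1) + a * s.esymm k := by
  rw [Multiset.esymm, Multiset.powersetCard_cons, Multiset.map_add, Multiset.sum_add,
    Multiset.esymm, Multiset.map_map]
  congr 1
  rw [Multiset.esymm, ← Multiset.sum_map_mul_left]
  congr 1
  apply Multiset.map_congr rfl
  intro t _
  simp [Multiset.prod_cons]

lemma map_multiset_esymm {F S : Type*} [CommRing S] [FunLike F R S] [RingHomClass F R S]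
    (φ : F) (s : Multiset R) (k : ℕ) :
    φ (s.esymm k) = (s.map φ).esymm k := by
  rw [Multiset.esymm, Multiset.esymm, map_multiset_sum, Multiset.map_map,
    Multiset.powersetCard_map, Multiset.map_map]
  congr 1
  apply Multiset.map_congr rfl
  intro t _
  simp [map_multiset_prod]

lemma esymm_top_zero (n k : ℕ) (h : n < k) : esymm (Fin n) R k = 0 := by
  rw [esymm]
  rw [Finset.powersetCard_eq_empty.mpr (by simpa using h)]
  simp

/-- peel off variable `0` -/
noncomputable def Psi (R : Type*) [CommRing R] (n : ℕ) :
    MvPolynomial (Fin (n+1)) R ≃ₐ[R] MvPolynomial (Fin n) (Polynomial R) :=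
  (renameEquiv R (_root_.finSuccEquiv n)).trans (optionEquivRight R (Fin n))

@[simp] lemma Psi_X_zero (n : ℕ) : Psi R n (X 0) = C Polynomial.X := by
  simp [Psi, finSuccEquiv_zero, optionEquivRight_X_none]

@[simp] lemma Psi_X_succ (n : ℕ) (i : Fin n) : Psi R n (X i.succ) = X i := by
  simp [Psi, finSuccEquiv_succ, optionEquivRight_X_some]

@[simp] lemma Psi_C (n : ℕ) (r : R) : Psi R n (C r) = C (Polynomial.C r) := by
  simp [Psi, optionEquivRight_C]

lemma Psi_esymm (n k : ℕ) :
    Psi R n (esymm (Fin (n+1)) R (k+1)) =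
      esymm (Fin n) (Polynomial R) (k+1)
        + C Polynomial.X * esymm (Fin n) (Polynomial R) k := by
  have h1 : Psi R n (esymm (Fin (n+1)) R (k+1)) =
      ((univ : Finset (Option (Fin n))).val.map
        (fun o => (optionEquivRight R (Fin n)) (X o))).esymm (k+1) := by
    rw [Psi]
    simp only [AlgEquiv.trans_apply, renameEquiv_apply, rename_esymm]
    rw [esymm_eq_multiset_esymm]
    rw [map_multiset_esymm (optionEquivRight R (Fin n))]
    rw [Multiset.map_map]
    rfl
  rw [h1]
  have h2 : (univ : Finset (Option (Fin n))).val = none ::ₘ (univ : Finset (Fin n)).val.map some := by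
    rw [_root_.univ_option]
    rfl
  rw [h2, Multiset.map_cons, multiset_esymm_cons, Multiset.map_map]
  have h3 : ∀ j, ((univ : Finset (Fin n)).val.map
      (fun x => (optionEquivRight R (Fin n)) (X (some x)))).esymm j
      = esymm (Fin n) (Polynomial R) j := by
    intro j
    rw [esymm_eq_multiset_esymm]
    congr 1
    apply Multiset.map_congr rfl
    intro x _
    simp [optionEquivRight_X_some]
  simp only [Function.comp_def]
  rw [h3, h3, optionEquivRight_X_none]

end EsymmRec

section Tower

variable {R : Type*} [CommRing R] {n : ℕ}

noncomputable def dSeq (n : ℕ) (c : Fin (n+1) → R) : ℕ → Polynomial R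
  | 0 => 1
  | (j+1) => Polynomial.C (if h : j < n+1 then c ⟨j, h⟩ else 0) - Polynomial.X * dSeq n c j

noncomputable def fPoly (n : ℕ) (c : Fin (n+1) → R) : Polynomial R :=
  (-1)^(n+1) * dSeq n c (n+1)

lemma dSeq_sign_monic [Nontrivial R] (c : Fin (n+1) → R) :
    ∀ j, ((-1 : Polynomial R)^j * dSeq n c j).Monic ∧
      ((-1 : Polynomial R)^j * dSeq n c j).natDegree = j := by
  intro j
  induction j with
  | zero =>
    simp only [pow_zero, dSeq, one_mul]
    exact ⟨Polynomial.monic_one, Polynomial.natDegree_one⟩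
  | succ j ih =>
    have hE : (-1 : Polynomial R)^(j+1) * dSeq n c (j+1) =
        Polynomial.X * ((-1 : Polynomial R)^j * dSeq n c j) +
          Polynomial.C ((-1 : R)^(j+1) * (if h : j < n+1 then c ⟨j, h⟩ else 0)) := by
      show (-1 : Polynomial R)^(j+1) *
        (Polynomial.C (if h : j < n+1 then c ⟨j, h⟩ else 0) - Polynomial.X * dSeq n c j) = _
      rw [map_mul]
      have : Polynomial.C ((-1 : R)^(j+1)) = (-1 : Polynomial R)^(j+1) := by
        simp [map_pow]
      rw [this]
      ring
    have hmul : (Polynomial.X * ((-1 : Polynomial R)^j * dSeq n c j)).Monic :=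
      Polynomial.monic_X.mul ih.1
    have hdeg : (Polynomial.X * ((-1 : Polynomial R)^j * dSeq n c j)).natDegree = j + 1 := by
      rw [Polynomial.Monic.natDegree_mul Polynomial.monic_X ih.1, ih.2,
        Polynomial.natDegree_X]
      omega
    have hdeg' : (Polynomial.X * ((-1 : Polynomial R)^j * dSeq n c j)).degree = ((j+1 : ℕ) : WithBot ℕ) := by
      rw [Polynomial.degree_eq_natDegree hmul.ne_zero, hdeg]
    constructor
    · rw [hE]
      exact hmul.add_of_left (lt_of_le_of_lt Polynomial.degree_C_le
        (by rw [hdeg']; exact_mod_cast Nat.succ_pos j))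
    · rw [hE]
      rw [Polynomial.natDegree_eq_of_degree_eq
        (Polynomial.degree_add_eq_left_of_degree_lt
          (lt_of_le_of_lt Polynomial.degree_C_le
            (by rw [hdeg']; exact_mod_cast Nat.succ_pos j)))]
      exact hdeg

lemma fPoly_monic [Nontrivial R] (c : Fin (n+1) → R) : (fPoly n c).Monic :=
  (dSeq_sign_monic c (n+1)).1

lemma fPoly_natDegree [Nontrivial R] (c : Fin (n+1) → R) : (fPoly n c).natDegree = n+1 :=
  (dSeq_sign_monic c (n+1)).2

end Tower

section IdealId

variable {R : Type*} [CommRing R] {n : ℕ}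

noncomputable def cIdeal (R : Type*) [CommRing R] (n : ℕ) (c : Fin n → R) :
    Ideal (MvPolynomial (Fin n) R) :=
  Ideal.span (Set.range fun i : Fin n => esymm (Fin n) R ((i : ℕ)+1) - C (c i))

noncomputable def JIdeal (n : ℕ) (c : Fin (n+1) → R) :
    Ideal (MvPolynomial (Fin n) (Polynomial R)) :=
  Ideal.span ({C (fPoly n c)} ∪
    Set.range fun i : Fin n =>
      esymm (Fin n) (Polynomial R) ((i : ℕ)+1) - C (dSeq n c ((i : ℕ)+1)))

lemma Psi_gen (c : Fin (n+1) → R) (i : Fin (n+1)) :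
    Psi R n (esymm (Fin (n+1)) R ((i : ℕ)+1) - C (c i)) =
      (esymm (Fin n) (Polynomial R) ((i : ℕ)+1) - C (dSeq n c ((i : ℕ)+1)))
      + C Polynomial.X *
        (esymm (Fin n) (Polynomial R) (i : ℕ) - C (dSeq n c (i : ℕ))) := by
  rw [map_sub, Psi_esymm, Psi_C]
  have hd : dSeq n c ((i : ℕ)+1) =
      Polynomial.C (c i) - Polynomial.X * dSeq n c (i : ℕ) := by
    show Polynomial.C (if h : (i : ℕ) < n+1 then c ⟨(i : ℕ), h⟩ else 0)
      - Polynomial.X * dSeq n c (i : ℕ) = _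
    rw [dif_pos i.isLt]
  rw [hd, map_sub, map_mul]
  ring

lemma gen_mem_map (c : Fin (n+1) → R) :
    ∀ j, j ≤ n+1 → esymm (Fin n) (Polynomial R) j - C (dSeq n c j) ∈
      Ideal.map (Psi R n) (cIdeal R (n+1) c) := by
  intro j
  induction j with
  | zero =>
    intro _
    have : esymm (Fin n) (Polynomial R) 0 - C (dSeq n c 0) = 0 := by
      show esymm (Fin n) (Polynomial R) 0 - C 1 = 0
      rw [esymm_zero, map_one, sub_self]
    rw [this]; exact zero_mem _
  | succ j ih =>
    intro hj
    have hi : j < n+1 := hj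
    have h1 : esymm (Fin n) (Polynomial R) (j+1) - C (dSeq n c (j+1)) =
        Psi R n (esymm (Fin (n+1)) R (j+1) - C (c ⟨j, hi⟩))
          - C Polynomial.X * (esymm (Fin n) (Polynomial R) j - C (dSeq n c j)) := by
      rw [Psi_gen c ⟨j, hi⟩]
      ring
    rw [h1]
    refine sub_mem (Ideal.mem_map_of_mem _ (Ideal.subset_span ⟨⟨j, hi⟩, rfl⟩))
      (Ideal.mul_mem_left _ _ (ih (le_of_lt hj)))

lemma Cf_mem_map (c : Fin (n+1) → R) :
    C (fPoly n c) ∈ Ideal.map (Psi R n) (cIdeal R (n+1) c) := by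
  have h := gen_mem_map c (n+1) le_rfl
  rw [esymm_top_zero n (n+1) (Nat.lt_succ_self n), zero_sub] at h
  have h2 : C (dSeq n c (n+1)) ∈ Ideal.map (Psi R n) (cIdeal R (n+1) c) :=
    (neg_mem_iff).mp h
  have : (C (fPoly n c) : MvPolynomial (Fin n) (Polynomial R)) =
      C ((-1 : Polynomial R)^(n+1)) * C (dSeq n c (n+1)) := by
    rw [← map_mul]; rfl
  rw [this]
  exact Ideal.mul_mem_left _ _ h2

lemma gen_mem_J (c : Fin (n+1) → R) :
    ∀ j, j ≤ n+1 → esymm (Fin n) (Polynomial R) j - C (dSeq n c j) ∈ JIdeal n c := by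
  intro j hj
  match j, hj with
  | 0, _ =>
    have : esymm (Fin n) (Polynomial R) 0 - C (dSeq n c 0) = 0 := by
      show esymm (Fin n) (Polynomial R) 0 - C 1 = 0
      rw [esymm_zero, map_one, sub_self]
    rw [this]; exact zero_mem _
  | (j+1), hj =>
    rcases Nat.lt_or_ge j n with hjn | hjn
    · exact Ideal.subset_span (Or.inr ⟨⟨j, hjn⟩, rfl⟩)
    · have hj' : j = n := le_antisymm (Nat.succ_le_succ_iff.mp hj) hjn
      rw [hj']
      rw [esymm_top_zero n (n+1) (Nat.lt_succ_self n), zero_sub]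
      have hd : (C (dSeq n c (n+1)) : MvPolynomial (Fin n) (Polynomial R)) =
          C ((-1 : Polynomial R)^(n+1)) * C (fPoly n c) := by
        rw [← map_mul]
        congr 1
        rw [fPoly, ← mul_assoc, ← pow_add]
        rw [(Even.neg_one_pow ⟨n+1, by ring⟩ : (-1 : Polynomial R)^(n+1+(n+1)) = 1), one_mul]
      rw [hd]
      exact neg_mem (Ideal.mul_mem_left _ _ (Ideal.subset_span (Or.inl rfl)))

lemma map_cIdeal_eq (c : Fin (n+1) → R) :
    Ideal.map (Psi R n) (cIdeal R (n+1) c) = JIdeal n c := by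
  apply le_antisymm
  · rw [cIdeal, Ideal.map_span]
    apply Ideal.span_le.mpr
    rintro x ⟨y, ⟨i, rfl⟩, rfl⟩
    rw [Psi_gen c i]
    exact add_mem (gen_mem_J c ((i : ℕ)+1) (Nat.succ_le_succ (Nat.lt_succ_iff.mp i.isLt)))
      (Ideal.mul_mem_left _ _ (gen_mem_J c (i : ℕ) (le_of_lt i.isLt)))
  · rw [JIdeal]
    apply Ideal.span_le.mpr
    rintro x (rfl | ⟨i, rfl⟩)
    · exact Cf_mem_map c
    · exact gen_mem_map c ((i : ℕ)+1) (Nat.succ_le_succ (le_of_lt i.isLt))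

end IdealId

section Mon

variable {R : Type*} [CommRing R] {n : ℕ}

noncomputable def monB (R : Type*) [CommRing R] {n : ℕ} (a : CBox n) :
    MvPolynomial (Fin n) R :=
  ∏ i, X i ^ ((a i : ℕ))

noncomputable def combSum (lam : CBox n → R) : MvPolynomial (Fin n) R :=
  ∑ a : CBox n, C (lam a) * monB R a

lemma monB_isHomogeneous (a : CBox n) : (monB R a).IsHomogeneous (cwt a) := by
  rw [monB, cwt]
  exact IsHomogeneous.prod univ _ _ (fun i _ => isHomogeneous_X_pow i _)

lemma map_monB {S : Type*} [CommRing S] (φ : R →+* S) (a : CBox n) :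
    MvPolynomial.map φ (monB R a) = monB S a := by
  rw [monB, monB, map_prod]
  simp

lemma ctail_ccons (p : Fin (n+1)) (b : CBox n) : ctail (ccons p b) = b :=
  congrArg Prod.snd ((boxEquiv n).left_inv (p, b))

@[simp] lemma ccons_zero (p : Fin (n+1)) (b : CBox n) : ccons p b 0 = p := rfl

lemma Psi_monB (a : CBox (n+1)) :
    Psi R n (monB R a) =
      C (Polynomial.X ^ ((a 0 : ℕ))) * monB (Polynomial R) (ctail a) := by
  rw [monB, map_prod, Fin.prod_univ_succ, map_pow, Psi_X_zero, ← map_pow]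
  congr 1
  rw [monB]
  apply Finset.prod_congr rfl
  intro i _
  rw [map_pow, Psi_X_succ]
  have hv : ((ctail a i : ℕ)) = ((a i.succ : ℕ)) := by simp [ctail]
  rw [hv]

lemma Psi_combSum (lam : CBox (n+1) → R) :
    Psi R n (combSum lam) =
      combSum (fun b : CBox n =>
        ∑ p : Fin (n+1), Polynomial.C (lam (ccons p b)) * Polynomial.X ^ (p : ℕ)) := by
  rw [combSum, map_sum, ← Equiv.sum_comp (boxEquiv n), Fintype.sum_prod_type]
  rw [combSum, Finset.sum_comm]
  apply Finset.sum_congr rfl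
  intro b _
  rw [map_sum (C : Polynomial R →+* MvPolynomial (Fin n) (Polynomial R)), Finset.sum_mul]
  apply Finset.sum_congr rfl
  intro p _
  have hb : (boxEquiv n) (p, b) = ccons p b := rfl
  rw [hb, map_mul, Psi_C, Psi_monB, ccons_zero, ctail_ccons, map_mul]
  ring

end Mon

section MainInduction

lemma sum_ite_val {M : Type*} [AddCommMonoid M] {m : ℕ} (v : Fin m) (F : Fin m → M) :
    (∑ x : Fin m, if (v : ℕ) = (x : ℕ) then F x else 0) = F v := by
  rw [Finset.sum_eq_single_of_mem v (Finset.mem_univ _)]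
  · rw [if_pos rfl]
  · intro x _ hne
    rw [if_neg]
    intro hv
    exact hne ((Fin.val_injective hv).symm)

set_option maxHeartbeats 1000000 in
theorem cLI : ∀ (n : ℕ) (R : Type) [CommRing R] (c : Fin n → R) (lam : CBox n → R),
    combSum lam ∈ cIdeal R n c → lam = 0 := by
  intro n
  induction n with
  | zero =>
    intro R _ c lam h
    have hc : cIdeal R 0 c = ⊥ := by
      rw [cIdeal, Set.range_eq_empty, Ideal.span_empty]
    rw [hc, Ideal.mem_bot] at h
    have hcs : combSum lam = C (lam default) := by
      simp [combSum, monB, Finset.univ_unique]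
    rw [hcs] at h
    funext a
    have h0 : lam default = 0 := by
      have := (C_injective (Fin 0) R) (h.trans (map_zero C).symm)
      exact this
    rw [Subsingleton.elim a default, h0]
    rfl
  | succ n ih =>
    intro R instR c lam hmem
    rcases subsingleton_or_nontrivial R with hsub | hnt
    · funext a; exact Subsingleton.elim _ _
    · set f := fPoly n c with hfdef
      have hf : f.Monic := fPoly_monic c
      let Sbar := Polynomial R ⧸ Ideal.span {f}
      let mk : Polynomial R →+* Sbar := Ideal.Quotient.mk (Ideal.span {f})
      let ρ : MvPolynomial (Fin n) (Polynomial R) →+* MvPolynomial (Fin n) Sbar :=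
        MvPolynomial.map mk
      let cb : Fin n → Sbar := fun i => mk (dSeq n c ((i : ℕ)+1))
      have h1 : Psi R n (combSum lam) ∈ JIdeal n c := by
        rw [← map_cIdeal_eq c]
        exact Ideal.mem_map_of_mem _ hmem
      have h2 : ρ (Psi R n (combSum lam)) ∈ cIdeal Sbar n cb := by
        have hJ : Ideal.map ρ (JIdeal n c) ≤ cIdeal Sbar n cb := by
          rw [JIdeal, Ideal.map_span]
          apply Ideal.span_le.mpr
          rintro x ⟨y, (rfl | ⟨i, rfl⟩), rfl⟩
          · have hz : ρ (C f) = 0 := by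
              rw [MvPolynomial.map_C]
              have hmk : mk f = 0 := by
                rw [Ideal.Quotient.eq_zero_iff_mem]
                exact Ideal.subset_span rfl
              rw [hmk, map_zero]
            rw [hz]; exact zero_mem _
          · have hgen : ρ (esymm (Fin n) (Polynomial R) ((i : ℕ)+1) - C (dSeq n c ((i : ℕ)+1)))
                = esymm (Fin n) Sbar ((i : ℕ)+1) - C (cb i) := by
              rw [map_sub, map_esymm, MvPolynomial.map_C]
            rw [hgen]
            exact Ideal.subset_span ⟨i, rfl⟩
        exact hJ (Ideal.mem_map_of_mem _ h1)
      let g : CBox n → Polynomial R := fun b =>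
        ∑ p : Fin (n+1), Polynomial.C (lam (ccons p b)) * Polynomial.X ^ (p : ℕ)
      have h3 : ρ (Psi R n (combSum lam)) = combSum (fun b => mk (g b)) := by
        rw [Psi_combSum, combSum, combSum, map_sum]
        apply Finset.sum_congr rfl
        intro b _
        rw [map_mul, MvPolynomial.map_C, map_monB]
      have h4 : (fun b => mk (g b)) = 0 := by
        apply ih Sbar cb
        rw [← h3]; exact h2
      funext a
      have hdvd : f ∣ g (ctail a) := by
        have hz : mk (g (ctail a)) = 0 := congrFun h4 (ctail a)
        rw [Ideal.Quotient.eq_zero_iff_mem] at hz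
        exact Ideal.mem_span_singleton.mp hz
      have hdf : f.degree = ((n+1 : ℕ) : WithBot ℕ) := by
        rw [Polynomial.degree_eq_natDegree hf.ne_zero, fPoly_natDegree c]
      have hdeg : (g (ctail a)).degree < f.degree := by
        rw [hdf]
        apply lt_of_le_of_lt (Polynomial.degree_sum_le _ _)
        rw [Finset.sup_lt_iff (by exact_mod_cast WithBot.bot_lt_coe (n+1))]
        intro p _
        exact lt_of_le_of_lt (Polynomial.degree_C_mul_X_pow_le _ _)
          (by exact_mod_cast p.isLt)
      have hg0 : g (ctail a) = 0 := by
        by_contra h0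
        exact (hf.not_dvd_of_degree_lt h0 hdeg) hdvd
      have hco : lam (ccons (a 0) (ctail a)) = 0 := by
        have hc2 := congrArg (fun q => Polynomial.coeff q ((a 0 : ℕ))) hg0
        simp only [g, Polynomial.finset_sum_coeff, Polynomial.coeff_C_mul_X_pow,
          Polynomial.coeff_zero] at hc2
        have hc3 := sum_ite_val (m := n+1) (a 0) (fun x => lam (ccons x (ctail a)))
        exact hc3.symm.trans hc2
      have ha : ccons (a 0) (ctail a) = a := (boxEquiv n).right_inv a
      rw [ha] at hco
      rw [hco]; rfl

set_option maxHeartbeats 1000000 in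
theorem cSP : ∀ (n : ℕ) (R : Type) [CommRing R] (c : Fin n → R)
    (p : MvPolynomial (Fin n) R),
    ∃ lam : CBox n → R, p - combSum lam ∈ cIdeal R n c := by
  intro n
  induction n with
  | zero =>
    intro R _ c p
    obtain ⟨r, rfl⟩ := C_surjective (Fin 0) p
    refine ⟨fun _ => r, ?_⟩
    have hcs : combSum (fun _ : CBox 0 => r) = C r := by
      simp [combSum, monB, Finset.univ_unique]
    rw [hcs, sub_self]; exact zero_mem _
  | succ n ih =>
    intro R instR c p
    rcases subsingleton_or_nontrivial R with hsub | hnt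
    · refine ⟨0, ?_⟩
      haveI : Subsingleton (MvPolynomial (Fin (n+1)) R) := by
        constructor; intro a b
        apply MvPolynomial.ext
        intro m; exact Subsingleton.elim _ _
      rw [Subsingleton.elim (p - combSum 0) 0]
      exact zero_mem _
    · set f := fPoly n c with hfdef
      have hf : f.Monic := fPoly_monic c
      let Sbar := Polynomial R ⧸ Ideal.span {f}
      let mk : Polynomial R →+* Sbar := Ideal.Quotient.mk (Ideal.span {f})
      let ρ : MvPolynomial (Fin n) (Polynomial R) →+* MvPolynomial (Fin n) Sbar :=
        MvPolynomial.map mk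
      have hρsurj : Function.Surjective ρ :=
        MvPolynomial.map_surjective mk Ideal.Quotient.mk_surjective
      let cb : Fin n → Sbar := fun i => mk (dSeq n c ((i : ℕ)+1))
      have hdf : f.degree = ((n+1 : ℕ) : WithBot ℕ) := by
        rw [Polynomial.degree_eq_natDegree hf.ne_zero, fPoly_natDegree c]
      obtain ⟨lamb, hlamb⟩ := ih Sbar cb (ρ (Psi R n p))
      choose g0 hg0 using fun b => Ideal.Quotient.mk_surjective (lamb b)
      let g : CBox n → Polynomial R := fun b => g0 b %ₘ f
      have hmkg : ∀ b, mk (g b) = lamb b := by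
        intro b
        show mk (g0 b %ₘ f) = lamb b
        rw [Polynomial.modByMonic_eq_sub_mul_div, map_sub, hg0]
        have hz : mk (f * (g0 b /ₘ f)) = 0 := by
          rw [Ideal.Quotient.eq_zero_iff_mem]
          exact Ideal.mul_mem_right _ _ (Ideal.subset_span rfl)
        rw [hz, sub_zero]
      have hdegg : ∀ b, (g b).degree < ((n+1 : ℕ) : WithBot ℕ) := by
        intro b
        have := Polynomial.degree_modByMonic_lt (g0 b) hf
        rwa [hdf] at this
      let lam : CBox (n+1) → R := fun a => (g (ctail a)).coeff ((a 0 : ℕ))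
      refine ⟨lam, ?_⟩
      have hgsum : ∀ b, (∑ pp : Fin (n+1),
          Polynomial.C (lam (ccons pp b)) * Polynomial.X ^ (pp : ℕ)) = g b := by
        intro b
        have hl : ∀ pp : Fin (n+1), lam (ccons pp b) = (g b).coeff (pp : ℕ) := by
          intro pp
          show (g (ctail (ccons pp b))).coeff ((ccons pp b 0 : ℕ)) = _
          rw [ctail_ccons, ccons_zero]
        calc (∑ pp : Fin (n+1), Polynomial.C (lam (ccons pp b)) * Polynomial.X ^ (pp : ℕ))
            = ∑ pp : Fin (n+1), Polynomial.C ((g b).coeff (pp : ℕ)) * Polynomial.X ^ (pp : ℕ) := by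
              apply Finset.sum_congr rfl; intro pp _; rw [hl]
          _ = (g b).sum fun i c => Polynomial.C c * Polynomial.X ^ i :=
              Polynomial.sum_fin (fun i c => Polynomial.C c * Polynomial.X ^ i) (fun i => by simp) (hdegg b)
          _ = g b := Polynomial.sum_C_mul_X_pow_eq (g b)
      have hW : Psi R n (p - combSum lam) =
          Psi R n p - combSum g := by
        rw [map_sub, Psi_combSum]
        congr 1
        rw [combSum, combSum]
        apply Finset.sum_congr rfl
        intro b _
        rw [hgsum]
      have hρW : ρ (Psi R n (p - combSum lam)) ∈ cIdeal Sbar n cb := by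
        rw [hW, map_sub]
        have hρg : ρ (combSum g) = combSum lamb := by
          rw [combSum, combSum, map_sum]
          apply Finset.sum_congr rfl
          intro b _
          rw [map_mul, MvPolynomial.map_C, map_monB, hmkg]
        rw [hρg]
        exact hlamb
      have hmapJ0 : Ideal.map ρ (Ideal.span (Set.range fun i : Fin n =>
          esymm (Fin n) (Polynomial R) ((i : ℕ)+1) - C (dSeq n c ((i : ℕ)+1)))) =
          cIdeal Sbar n cb := by
        have hfun : (⇑ρ ∘ fun i : Fin n =>
            esymm (Fin n) (Polynomial R) ((i : ℕ)+1) - C (dSeq n c ((i : ℕ)+1))) =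
            fun i : Fin n => esymm (Fin n) Sbar ((i : ℕ)+1) - C (cb i) := by
          funext i
          show ρ (esymm (Fin n) (Polynomial R) ((i : ℕ)+1) - C (dSeq n c ((i : ℕ)+1))) = _
          rw [map_sub, map_esymm, MvPolynomial.map_C]
        rw [Ideal.map_span, cIdeal, ← Set.range_comp, hfun]
      rw [← hmapJ0] at hρW
      obtain ⟨w', hw'J0, hw'⟩ := (Ideal.mem_map_iff_of_surjective ρ hρsurj).mp hρW
      have hker : Psi R n (p - combSum lam) - w' ∈ RingHom.ker ρ := by
        rw [RingHom.mem_ker, map_sub, hw', sub_self]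
      have hkerspan : RingHom.ker ρ =
          Ideal.span {(C f : MvPolynomial (Fin n) (Polynomial R))} := by
        show RingHom.ker (MvPolynomial.map mk) = _
        rw [MvPolynomial.ker_map]
        show Ideal.map MvPolynomial.C (RingHom.ker (Ideal.Quotient.mk (Ideal.span {f}))) = _
        rw [Ideal.mk_ker, Ideal.map_span]
        congr 1
        simp
      have hWJ : Psi R n (p - combSum lam) ∈ JIdeal n c := by
        have hsplit : Psi R n (p - combSum lam) =
            w' + (Psi R n (p - combSum lam) - w') := by ring
        rw [hsplit]
        refine add_mem ?_ ?_
        · refine Ideal.span_mono ?_ hw'J0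
          intro x hx
          exact Or.inr hx
        · rw [hkerspan] at hker
          refine Ideal.span_mono ?_ hker
          intro x hx
          exact Or.inl hx
      rw [← map_cIdeal_eq c] at hWJ
      obtain ⟨x, hx, hxx⟩ := (Ideal.mem_map_iff_of_surjective
        (Psi R n) (Psi R n).surjective).mp hWJ
      have := (Psi R n).injective hxx
      rwa [← this]

end MainInduction

section Assembly

lemma esymm_isHomogeneous' {σ : Type*} [Fintype σ] {R : Type*} [CommRing R] (j : ℕ) :
    (esymm σ R j).IsHomogeneous j := by
  rw [esymm]
  apply IsHomogeneous.sum
  intro t ht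
  have hcard : (∑ _i ∈ t, 1) = j := by
    rw [← Finset.card_eq_sum_ones]
    exact (Finset.mem_powersetCard.mp ht).2
  exact hcard ▸ IsHomogeneous.prod t _ _ (fun i _ => isHomogeneous_X _ _)

lemma prod_range_add_one_eq_factorial' : ∀ n : ℕ, (∏ j ∈ Finset.range n, (j+1)) = n.factorial
  | 0 => rfl
  | (n+1) => by
    rw [Finset.prod_range_succ, prod_range_add_one_eq_factorial' n, Nat.factorial_succ]
    ring

lemma card_CBox (n : ℕ) : Fintype.card (CBox n) = n.factorial := by
  rw [Fintype.card_pi]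
  have h1 : (∏ i : Fin n, Fintype.card (Fin (n - (i : ℕ)))) = ∏ i : Fin n, (n - (i : ℕ)) := by
    apply Finset.prod_congr rfl; intro i _; rw [Fintype.card_fin]
  rw [h1, Fin.prod_univ_eq_prod_range (fun j => n - j) n]
  rw [← prod_range_add_one_eq_factorial' n, ← Finset.prod_range_reflect (fun j => j+1) n]
  apply Finset.prod_congr rfl
  intro j hj
  have := Finset.mem_range.mp hj
  omega

/-- The degree-`2k` component of the coinvariant algebra `ℤ[t₁,…,tₙ]/(e₁,…,eₙ)`
(with each `tᵢ` in degree 2, so it is spanned by images of homogeneous polynomials of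
polynomial degree `k`) has rank the number of permutations of `n` letters with exactly
`k` inversions, and the total rank of the quotient is `n!`. -/
theorem coinvariant_algebra_ranks (n k : ℕ)
    (I : Ideal (MvPolynomial (Fin n) ℤ))
    (hI : I = Ideal.span (Set.range fun i : Fin n =>
      MvPolynomial.esymm (Fin n) ℤ (i + 1))) :
    Module.finrank ℤ
      (Submodule.span ℤ {x : MvPolynomial (Fin n) ℤ ⧸ I |
        ∃ p : MvPolynomial (Fin n) ℤ, p.IsHomogeneous k ∧ x = Ideal.Quotient.mk I p}) =
      (Finset.univ.filter fun σ : Equiv.Perm (Fin n) =>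
        (Finset.univ.filter fun p : Fin n × Fin n =>
          p.1 < p.2 ∧ σ p.2 < σ p.1).card = k).card ∧
    Module.finrank ℤ (MvPolynomial (Fin n) ℤ ⧸ I) = n.factorial := by
  classical
  have hIc : I = cIdeal ℤ n (fun _ => 0) := by
    have hgen : (fun i : Fin n => esymm (Fin n) ℤ ((i : ℕ)+1) - C ((fun _ => (0:ℤ)) i))
        = (fun i : Fin n => esymm (Fin n) ℤ ((i : ℕ)+1)) := by
      funext i; rw [map_zero, sub_zero]
    rw [hI, cIdeal, hgen]
  -- the family
  set Q := MvPolynomial (Fin n) ℤ ⧸ I with hQ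
  set v : CBox n → Q := fun a => Ideal.Quotient.mk I (monB ℤ a) with hv
  -- linear independence
  have hli : LinearIndependent ℤ v := by
    rw [Fintype.linearIndependent_iff]
    intro g hg
    have hmk : Ideal.Quotient.mk I (combSum g) = 0 := by
      rw [combSum, map_sum, ← hg]
      apply Finset.sum_congr rfl
      intro a _
      rw [map_mul]
      have hC : (Ideal.Quotient.mk I) (C (g a)) = ((g a : ℤ) : Q) := by
        rw [eq_intCast (C : ℤ →+* MvPolynomial (Fin n) ℤ) (g a)]
        simp
      rw [hC, hv]
      rw [zsmul_eq_mul]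
    have hmem : combSum g ∈ I := by
      rwa [Ideal.Quotient.eq_zero_iff_mem] at hmk
    rw [hIc] at hmem
    have := cLI n ℤ (fun _ => 0) g hmem
    intro i
    exact congrFun this i
  -- spanning
  have hsp : ⊤ ≤ Submodule.span ℤ (Set.range v) := by
    intro x _
    obtain ⟨p, rfl⟩ := Ideal.Quotient.mk_surjective x
    obtain ⟨lam, hlam⟩ := cSP n ℤ (fun _ => 0) p
    rw [← hIc] at hlam
    have hx : Ideal.Quotient.mk I p = ∑ a : CBox n, lam a • v a := by
      have h1 : Ideal.Quotient.mk I p = Ideal.Quotient.mk I (combSum lam) := by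
        rw [← sub_eq_zero, ← map_sub, Ideal.Quotient.eq_zero_iff_mem]
        exact hlam
      rw [h1, combSum, map_sum]
      apply Finset.sum_congr rfl
      intro a _
      rw [map_mul]
      have hC : (Ideal.Quotient.mk I) (C (lam a)) = ((lam a : ℤ) : Q) := by
        rw [eq_intCast (C : ℤ →+* MvPolynomial (Fin n) ℤ) (lam a)]
        simp
      rw [hC, hv, zsmul_eq_mul]
    rw [hx]
    apply Submodule.sum_mem
    intro a _
    exact Submodule.smul_mem _ _ (Submodule.subset_span ⟨a, rfl⟩)
  have bQ : Module.Basis (CBox n) ℤ Q := Module.Basis.mk hli hsp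
  constructor
  · -- graded piece
    -- homogeneous ideal
    letI : GradedAlgebra (homogeneousSubmodule (Fin n) ℤ) := MvPolynomial.gradedAlgebra
    have hIhom : ∀ (m : ℕ) (q : MvPolynomial (Fin n) ℤ), q ∈ I →
        homogeneousComponent m q ∈ I := by
      have hhom : I.IsHomogeneous (homogeneousSubmodule (Fin n) ℤ) := by
        rw [hI]
        apply Ideal.homogeneous_span
        rintro x ⟨i, rfl⟩
        exact ⟨(i : ℕ)+1, (mem_homogeneousSubmodule _ _).mpr (esymm_isHomogeneous' _)⟩
      intro m q hq
      have hdec := hhom m hq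
      have heq : ((DirectSum.decompose (homogeneousSubmodule (Fin n) ℤ) q m :
          homogeneousSubmodule (Fin n) ℤ m) : MvPolynomial (Fin n) ℤ) =
          homogeneousComponent m q :=
        MvPolynomial.decomposition.decompose'_apply q m
      rwa [heq] at hdec
    set vk : {a : CBox n // cwt a = k} → Q := fun a => v a.1 with hvk
    have hlik : LinearIndependent ℤ vk := hli.comp Subtype.val Subtype.val_injective
    have hspan_eq : Submodule.span ℤ {x : Q |
        ∃ p : MvPolynomial (Fin n) ℤ, p.IsHomogeneous k ∧ x = Ideal.Quotient.mk I p}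
        = Submodule.span ℤ (Set.range vk) := by
      apply le_antisymm
      · apply Submodule.span_le.mpr
        rintro x ⟨p, hp, rfl⟩
        obtain ⟨lam, hlam⟩ := cSP n ℤ (fun _ => 0) p
        rw [← hIc] at hlam
        have hcomp : homogeneousComponent k (p - combSum lam) ∈ I := hIhom k _ hlam
        have hp' : homogeneousComponent k p = p := by
          have := homogeneousComponent_of_mem
            ((mem_homogeneousSubmodule _ _).mpr hp) (m := k)
          simpa using this
        have hcs : homogeneousComponent k (combSum lam) =
            ∑ a : CBox n, if k = cwt a then C (lam a) * monB ℤ a else 0 := by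
          rw [combSum, map_sum]
          apply Finset.sum_congr rfl
          intro a _
          have hmem2 : C (lam a) * monB ℤ a ∈ homogeneousSubmodule (Fin n) ℤ (cwt a) :=
            (mem_homogeneousSubmodule _ _).mpr ((monB_isHomogeneous a).C_mul _)
          exact homogeneousComponent_of_mem hmem2
        rw [map_sub, hp'] at hcomp
        have hx : Ideal.Quotient.mk I p =
            Ideal.Quotient.mk I (homogeneousComponent k (combSum lam)) := by
          rw [← sub_eq_zero, ← map_sub, Ideal.Quotient.eq_zero_iff_mem]
          exact hcomp
        rw [hx, hcs, map_sum]
        apply Submodule.sum_mem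
        intro a _
        by_cases hka : k = cwt a
        · rw [if_pos hka, map_mul]
          have hC : (Ideal.Quotient.mk I) (C (lam a)) = ((lam a : ℤ) : Q) := by
            rw [eq_intCast (C : ℤ →+* MvPolynomial (Fin n) ℤ) (lam a)]
            simp
          rw [hC, ← zsmul_eq_mul]
          exact Submodule.smul_mem _ _
            (Submodule.subset_span ⟨⟨a, hka.symm⟩, rfl⟩)
        · rw [if_neg hka, map_zero]
          exact zero_mem _
      · apply Submodule.span_le.mpr
        rintro x ⟨⟨a, ha⟩, rfl⟩
        apply Submodule.subset_span
        exact ⟨monB ℤ a, ha ▸ monB_isHomogeneous a, rfl⟩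
    rw [hspan_eq]
    have bk : Module.Basis {a : CBox n // cwt a = k} ℤ
        (Submodule.span ℤ (Set.range vk)) := Module.Basis.span hlik
    rw [Module.finrank_eq_card_basis bk]
    rw [Fintype.card_subtype]
    rw [← count_inv_eq_count_box n k]
    rfl
  · rw [Module.finrank_eq_card_basis bQ, card_CBox]

end Assembly
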